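/- Let A be an abelian group, 𝒯 a countable directed poset and X : 𝒯 → Set_* a diagram of pointed sets satisfying the Mittag-Leffler condition. Then the cokernel H(X,A) of the natural map ρ is algebraically compact; explicitly, H(X,A) is cotorsion and for every prime p the subgroup ⋂_{n∈ℕ} pⁿ·H(X,A) is p-divisible, i.e., p·(⋂_{n∈ℕ} pⁿ·H(X,A)) = ⋂_{n∈ℕ} pⁿ·H(X,A). -/

import Mathlib

open CategoryTheory Finsupp

universe u v w

/-- The smash product `Y ∧ A` of a pointed set `(Y, y0)` with an abelian group `A`:
the group of finitely supported functions `Y →₀ A` vanishing at the basepoint,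
i.e. `⊕_{y ∈ Y∖{y0}} A`. -/
def Smash (Y : Type u) (y0 : Y) (A : Type v) [AddCommGroup A] :
    AddSubgroup (Y →₀ A) where
  carrier := {f | f y0 = 0}
  add_mem' := by
    intro a b ha hb
    simp only [Set.mem_setOf_eq, Finsupp.add_apply] at *
    rw [ha, hb, add_zero]
  zero_mem' := by simp
  neg_mem' := by
    intro a ha
    simp only [Set.mem_setOf_eq, Finsupp.neg_apply] at *
    rw [ha, neg_zero]

theorem mem_smash {Y : Type u} {y0 : Y} {A : Type v} [AddCommGroup A] {f : Y →₀ A} :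
    f ∈ Smash Y y0 A ↔ f y0 = 0 := Iff.rfl

/-- The pushforward homomorphism `g_* : Y∧A → Z∧A` induced by a (pointed) map
`g : Y → Z`: `(g_* f)(z) = ∑_{y : g y = z} f y` for `z ≠ z0`, and `(g_* f)(z0) = 0`. -/
noncomputable def smashMap {Y : Type u} {Z : Type v} (y0 : Y) (z0 : Z) (g : Y → Z)
    (A : Type w) [AddCommGroup A] :
    Smash Y y0 A →+ Smash Z z0 A where
  toFun f := ⟨(Finsupp.mapDomain g f.1).erase z0, Finsupp.erase_same⟩
  map_zero' := by
    apply Subtype.ext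
    simp
  map_add' f₁ f₂ := by
    apply Subtype.ext
    show (Finsupp.mapDomain g ((f₁ : Y →₀ A) + (f₂ : Y →₀ A))).erase z0 = _
    rw [Finsupp.mapDomain_add, Finsupp.erase_add]
    rfl

theorem smashMap_comp {Y : Type u} {Z : Type v} {W : Type w} (y0 : Y) (z0 : Z) (w0 : W)
    (g : Y → Z) (g' : Z → W) (hg' : g' z0 = w0)
    (A : Type*) [AddCommGroup A] (f : Smash Y y0 A) :
    smashMap z0 w0 g' A (smashMap y0 z0 g A f) = smashMap y0 w0 (g' ∘ g) A f := by
  classical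
  apply Subtype.ext
  show (Finsupp.mapDomain g' ((Finsupp.mapDomain g f.1).erase z0)).erase w0
      = (Finsupp.mapDomain (g' ∘ g) f.1).erase w0
  rw [Finsupp.mapDomain_comp]
  set h := Finsupp.mapDomain g f.1 with hh
  have key : Finsupp.mapDomain g' (h.erase z0)
      = Finsupp.mapDomain g' h - Finsupp.single w0 (h z0) := by
    have h1 : h.erase z0 = h - Finsupp.single z0 (h z0) := by
      ext a
      by_cases ha : a = z0
      · subst ha; simp
      · simp [Finsupp.erase_ne ha, Finsupp.single_apply, Ne.symm ha, ha]
    rw [h1]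
    have h2 := map_sub (Finsupp.mapDomain.addMonoidHom g') h (Finsupp.single z0 (h z0))
    simp only [Finsupp.mapDomain.addMonoidHom_apply] at h2
    rw [h2, Finsupp.mapDomain_single, hg']
  rw [key]
  ext a
  by_cases ha : a = w0
  · subst ha; simp
  · simp [Finsupp.erase_ne ha, Finsupp.single_apply, Ne.symm ha, ha]
/-- The inverse limit of a diagram of pointed sets, as a subset of the product. -/
def plim {D : Type u} [Category.{v} D] (F : D ⥤ Pointed.{w}) :
    Set (∀ d : D, (F.obj d).X) :=
  {x | ∀ ⦃d d' : D⦄ (u : d ⟶ d'), (F.map u).toFun (x d) = x d'}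

/-- The basepoint of the inverse limit of a diagram of pointed sets. -/
def plimPt {D : Type u} [Category.{v} D] (F : D ⥤ Pointed.{w}) : plim F :=
  ⟨fun d => (F.obj d).point, fun _ _ u => (F.map u).map_point⟩

/-- The inverse limit `lim_D (X ∧ A)` of the diagram of abelian groups obtained by
smashing a diagram of pointed sets with an abelian group `A`. -/
noncomputable def glim {D : Type u} [Category.{v} D] (F : D ⥤ Pointed.{w})
    (A : Type*) [AddCommGroup A] :
    AddSubgroup (∀ d : D, Smash (F.obj d).X (F.obj d).point A) where
  carrier := {h | ∀ ⦃d d' : D⦄ (u : d ⟶ d'),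
      smashMap (F.obj d).point (F.obj d').point (F.map u).toFun A (h d) = h d'}
  add_mem' := by
    intro a b ha hb d d' u
    rw [Pi.add_apply, map_add, ha u, hb u]
    rfl
  zero_mem' := by
    intro d d' u
    rw [Pi.zero_apply, map_zero]
    rfl
  neg_mem' := by
    intro a ha d d' u
    rw [Pi.neg_apply, map_neg, ha u]
    rfl

/-- The natural map `ρ : (lim_D X) ∧ A → lim_D (X ∧ A)`, whose component at `d`
is induced by the projection `lim_D X → X d`. -/
noncomputable def rho {D : Type u} [Category.{v} D] (F : D ⥤ Pointed.{w})
    (A : Type*) [AddCommGroup A] :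
    Smash (plim F) (plimPt F) A →+ glim F A where
  toFun f := ⟨fun d => smashMap (plimPt F) (F.obj d).point (fun x => x.1 d) A f, by
    intro d d' u
    rw [smashMap_comp (plimPt F) (F.obj d).point (F.obj d').point _ _ (F.map u).map_point A f]
    have : ((F.map u).toFun ∘ fun x : plim F => x.1 d) = fun x : plim F => x.1 d' := by
      funext x
      exact x.2 u
    rw [this]⟩
  map_zero' := by
    apply Subtype.ext
    funext d
    show smashMap (plimPt F) (F.obj d).point (fun x => x.1 d) A 0 = (0 : Smash _ _ A)
    exact map_zero _
  map_add' f₁ f₂ := by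
    apply Subtype.ext
    funext d
    show smashMap (plimPt F) (F.obj d).point (fun x => x.1 d) A (f₁ + f₂)
        = smashMap (plimPt F) (F.obj d).point (fun x => x.1 d) A f₁
          + smashMap (plimPt F) (F.obj d).point (fun x => x.1 d) A f₂
    exact map_add _ f₁ f₂
/-- The Mittag-Leffler condition for a diagram of pointed sets indexed by a
preordered set `T` (with structure maps `X(s) → X(t)` for `t ≤ s`): for every `t`
there is `s ≥ t` such that for every `r ≥ s` the images of `X(s)` and of `X(r)`
in `X(t)` coincide. -/
def MittagLeffler {T : Type u} [Preorder T] (F : Tᵒᵖ ⥤ Pointed.{w}) : Prop :=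
  ∀ t : T, ∃ s : T, ∃ hts : t ≤ s, ∀ r : T, ∀ hsr : s ≤ r,
    Set.range (F.map (homOfLE hts).op).toFun
      = Set.range (F.map (homOfLE (hts.trans hsr)).op).toFun
/-- `C` is cotorsion, i.e. `Ext¹_ℤ(ℚ, C) = 0`.  Applying `Hom(-, C)` to the standard
free presentation `0 → ⊕_{n ∈ ℕ} ℤ → ⊕_{n ∈ ℕ} ℤ → ℚ → 0` (where the first map sends
`e_n ↦ e_n - (n+1)·e_{n+1}`) identifies `Ext¹_ℤ(ℚ, C)` with the cokernel of
`C^ℕ → C^ℕ, (x_n) ↦ (x_n - (n+1)x_{n+1})`; hence `Ext¹_ℤ(ℚ, C) = 0` iff every system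
of equations `x_n - (n+1)·x_{n+1} = a_n` (`n ∈ ℕ`) is solvable in `C`. -/
def Cotorsion (C : Type*) [AddCommGroup C] : Prop :=
  ∀ a : ℕ → C, ∃ x : ℕ → C, ∀ n : ℕ, x n - (n + 1) • x (n + 1) = a n

/-!
Choose a cofinal chain `c₀ ≤ c₁ ≤ ⋯` in `T`. The kernels `Vₙ` of the evaluations
`G = lim (X ∧ A) → X(cₙ) ∧ A` form a complete separated filtration of `G`: a series `∑ eₖ` with
`eₖ ∈ Vₖ` converges, its coordinates being eventually constant. By Mittag-Leffler, a point in
the support of a coordinate of `g ∈ G` lies in the eventual range and hence lifts to a thread of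
`lim X`; so the image `R` of `ρ` is dense, `R + Vₙ = G`, and this already makes `G ⧸ R`
cotorsion: lift `aₙ` into `Vₙ` and sum the explicit series solving `xₙ - (n+1)xₙ₊₁ = aₙ`.

For the first Ulm subgroup, let `[g] ∈ ⋂ pⁿ(G ⧸ R)`. One subtracts successively `pᵏeₖ` with
`eₖ ∈ R ∩ Vₖ`, keeping the remainder in `Vₖ₊₁` with all coefficients divisible by `pᵏ⁺¹`. The
key point is that the coefficients of `f` occur among those of `ρ f` (finitely many threads are
already separated at a single index), so divisibility of the coefficients of `ρ f` passes to `f`;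
and if the coefficients of `f` are divisible by `pᵏ` and `ρ f` vanishes at `cₖ`, then
`ρ f ∈ pᵏ(R ∩ Vₖ)`. Then `g ≡ ∑ pᵏeₖ = e₀ + p·∑ pᵏeₖ₊₁`, and the class of the last sum is
divisible by every `pⁿ`, its first `n` terms lying in `R` and its tail being a multiple of `pⁿ`.
-/

open Finset

section CompleteFiltration

variable {G : Type*} [AddCommGroup G] {V : ℕ → AddSubgroup G}

variable (V) in
def IsFilteredSum (e : ℕ → G) (s : G) : Prop :=
  ∀ N, s - ∑ k ∈ range N, e k ∈ V N

variable (V) in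
structure IsCompleteFiltration : Prop where
  antitone : Antitone V
  eq_zero_of_forall_mem : ∀ g, (∀ n, g ∈ V n) → g = 0
  exists_isFilteredSum : ∀ e : ℕ → G, (∀ k, e k ∈ V k) → ∃ s, IsFilteredSum V e s

namespace IsFilteredSum

variable {e : ℕ → G} {s : G}

lemma nsmul (h : IsFilteredSum V e s) (m : ℕ) :
    IsFilteredSum V (fun k => m • e k) (m • s) := fun N => by
  simpa only [← Finset.smul_sum, ← smul_sub] using nsmul_mem (h N) m

lemma unique (hV : IsCompleteFiltration V) (h : IsFilteredSum V e s) {s' : G}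
    (h' : IsFilteredSum V e s') : s = s' :=
  sub_eq_zero.1 <| hV.eq_zero_of_forall_mem _ fun N => by
    simpa using sub_mem (h N) (h' N)

lemma shift (hV : Antitone V) (h : IsFilteredSum V e s) (n : ℕ) :
    IsFilteredSum V (fun k => e (n + k)) (s - ∑ k ∈ range n, e k) := fun N => by
  have := h (n + N)
  rw [sum_range_add, ← sub_sub] at this
  exact hV (Nat.le_add_left N n) this

lemma of_telescope (w : ℕ → G) (hw : ∀ k, w k ∈ V k) :
    IsFilteredSum V (fun k => w k - w (k + 1)) (w 0) := fun N => by
  rw [sum_range_sub', sub_sub_cancel]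
  exact hw N

end IsFilteredSum

lemma exists_isFilteredSum_of_step (P Q : ℕ → G → Prop) (q : ℕ → ℕ)
    (hPV : ∀ k w, P k w → w ∈ V k) (step : ∀ k w, P k w → ∃ e, Q k e ∧ P (k + 1) (w - q k • e))
    {w₀ : G} (h₀ : P 0 w₀) :
    ∃ e : ℕ → G, (∀ k, Q k (e k)) ∧ IsFilteredSum V (fun k => q k • e k) w₀ := by
  choose! e heQ heP using step
  let w : ℕ → G := fun k => Nat.rec w₀ (fun k wk => wk - q k • e k wk) k
  have hw : ∀ k, P k (w k) := fun k => by
    induction k with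
    | zero => exact h₀
    | succ k ih => exact heP k _ ih
  refine ⟨fun k => e k (w k), fun k => heQ k _ (hw k), ?_⟩
  convert IsFilteredSum.of_telescope w fun k => hPV k _ (hw k) using 2 with k
  · exact (sub_sub_cancel _ _).symm
  · rfl

namespace IsCompleteFiltration

variable (hV : IsCompleteFiltration V)
include hV

lemma exists_sub_nsmul_eq (m : ℕ → ℕ) (a : ℕ → G) (ha : ∀ n, a n ∈ V n) :
    ∃ x : ℕ → G, ∀ n, x n - m n • x (n + 1) = a n := by
  -- `x n = ∑ j, (m n * ⋯ * m (n + j - 1)) • a (n + j)`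
  let coeff (n j : ℕ) : ℕ := ∏ i ∈ range j, m (n + i)
  have hcoeff : ∀ n j, coeff n (1 + j) = m n * coeff (n + 1) j := fun n j => by
    simp only [coeff]
    rw [add_comm 1 j, prod_range_succ', add_zero, mul_comm]
    simp only [add_assoc, add_comm 1]
  choose x hx using fun n => hV.exists_isFilteredSum (fun j => coeff n j • a (n + j)) fun j =>
    nsmul_mem (hV.antitone (Nat.le_add_left j n) (ha (n + j))) _
  refine ⟨x, fun n => ?_⟩
  have h1 := (hx n).shift hV.antitone 1
  simp only [hcoeff, mul_smul, ← add_assoc, sum_range_one, add_zero] at h1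
  rw [← h1.unique hV ((hx (n + 1)).nsmul (m n))]
  simp [coeff]

theorem cotorsion_quotient (R : AddSubgroup G) (hR : ∀ g n, ∃ r ∈ R, g - r ∈ V n) :
    Cotorsion (G ⧸ R) := by
  intro a
  choose g hg using fun n => QuotientAddGroup.mk_surjective (a n)
  choose r hr hrV using fun n => hR (g n) n
  obtain ⟨x, hx⟩ := hV.exists_sub_nsmul_eq (fun n => n + 1) _ hrV
  refine ⟨fun n => (x n : G ⧸ R), fun n => ?_⟩
  rw [← QuotientAddGroup.mk_nsmul, ← QuotientAddGroup.mk_sub, hx n, QuotientAddGroup.mk_sub,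
    (QuotientAddGroup.eq_zero_iff _).2 (hr n), sub_zero, hg]

lemma exists_pow_nsmul_eq (p : ℕ) {e : ℕ → G} (he : ∀ k, e k ∈ V k) {s : G}
    (hs : IsFilteredSum V (fun k => p ^ k • e k) s) (n : ℕ) :
    ∃ t, IsFilteredSum V (fun k => p ^ k • e (n + k)) t ∧
      p ^ n • t = s - ∑ k ∈ range n, p ^ k • e k := by
  obtain ⟨t, ht⟩ := hV.exists_isFilteredSum (fun k => p ^ k • e (n + k)) fun k =>
    nsmul_mem (hV.antitone (Nat.le_add_left k n) (he (n + k))) _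
  refine ⟨t, ht, (ht.nsmul (p ^ n)).unique hV ?_⟩
  simpa only [smul_smul, ← pow_add] using hs.shift hV.antitone n

variable {R : AddSubgroup G} (p : ℕ) {e : ℕ → G} (heR : ∀ k, e k ∈ R) (heV : ∀ k, e k ∈ V k)
  {s : G} (hs : IsFilteredSum V (fun k => p ^ k • e k) s)
include heR heV hs

lemma mk_mem_iInter_range_pow_nsmul :
    (s : G ⧸ R) ∈ ⋂ n : ℕ, Set.range fun y : G ⧸ R => p ^ n • y := by
  refine Set.mem_iInter.2 fun n => ?_
  obtain ⟨t, -, ht⟩ := hV.exists_pow_nsmul_eq p heV hs n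
  refine ⟨t, ?_⟩
  show p ^ n • (t : G ⧸ R) = s
  rw [← QuotientAddGroup.mk_nsmul, ht, QuotientAddGroup.mk_sub,
    (QuotientAddGroup.eq_zero_iff _).2 (sum_mem fun k _ => nsmul_mem (heR k) _), sub_zero]

lemma mk_mem_image_nsmul_iInter :
    (s : G ⧸ R) ∈ (fun y : G ⧸ R => p • y) '' ⋂ n : ℕ, Set.range fun y : G ⧸ R => p ^ n • y := by
  obtain ⟨t, ht, hpt⟩ := hV.exists_pow_nsmul_eq p heV hs 1
  refine ⟨t, hV.mk_mem_iInter_range_pow_nsmul p (fun k => heR _)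
    (fun k => hV.antitone (Nat.le_add_left k 1) (heV _)) ht, ?_⟩
  simp only [pow_one, sum_range_one, pow_zero, one_smul] at hpt
  show p • (t : G ⧸ R) = s
  rw [← QuotientAddGroup.mk_nsmul, hpt, QuotientAddGroup.mk_sub,
    (QuotientAddGroup.eq_zero_iff _).2 (heR 0), sub_zero]

end IsCompleteFiltration

end CompleteFiltration

open Opposite

section Diagram

variable {T : Type u} [PartialOrder T] (F : Tᵒᵖ ⥤ Pointed.{w})

def res {a b : T} (h : a ≤ b) : (F.obj (op b)).X → (F.obj (op a)).X :=
  (F.map (homOfLE h).op).toFun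

lemma map_toFun_eq_res {d d' : Tᵒᵖ} (u : d ⟶ d') :
    (F.map u).toFun = res F (leOfHom u.unop) := rfl

lemma res_res {a b c : T} (hab : a ≤ b) (hbc : b ≤ c) (z : (F.obj (op c)).X) :
    res F hab (res F hbc z) = res F (hab.trans hbc) z := by
  show (F.map (homOfLE hbc).op ≫ F.map (homOfLE hab).op).toFun z = _
  rw [← F.map_comp]
  rfl

lemma res_self {a : T} (z : (F.obj (op a)).X) : res F le_rfl z = z := by
  simp only [res, homOfLE_refl, op_id, F.map_id]
  rfl

lemma plim_res (x : plim F) {a b : T} (h : a ≤ b) : res F h (x.1 (op b)) = x.1 (op a) :=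
  x.2 _

lemma exists_plim_of_chain {c : ℕ → T} (hc : Monotone c) (hcof : ∀ t, ∃ n, t ≤ c n)
    (z : ∀ m, (F.obj (op (c m))).X) (hz : ∀ m, res F (hc m.le_succ) (z (m + 1)) = z m) :
    ∃ x : plim F, ∀ m, x.1 (op (c m)) = z m := by
  have hz' : ∀ m m' (h : m ≤ m'), res F (hc h) (z m') = z m := by
    intro m m' h
    induction m', h using Nat.le_induction with
    | base => exact res_self F _
    | succ m' hm ih => rw [← ih, ← hz m', res_res]
  choose N hN using hcof
  have key : ∀ t m (h : t ≤ c m), res F h (z m) = res F (hN t) (z (N t)) := by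
    intro t m h
    rw [← hz' m (max m (N t)) (le_max_left _ _), ← hz' (N t) (max m (N t)) (le_max_right _ _),
      res_res, res_res]
  refine ⟨⟨fun d => res F (hN d.unop) (z (N d.unop)), fun d d' u => ?_⟩, fun m => ?_⟩
  · rw [map_toFun_eq_res, res_res, key]
  · exact (key _ m le_rfl).symm.trans (res_self F _)

end Diagram

lemma exists_monotone_cofinal (T : Type u) [PartialOrder T] [IsDirected T (· ≤ ·)] [Nonempty T]
    [Countable T] : ∃ c : ℕ → T, Monotone c ∧ ∀ t, ∃ n, t ≤ c n := by
  obtain ⟨c, hc, hc_top⟩ := Filter.exists_seq_monotone_tendsto_atTop_atTop T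
  exact ⟨c, hc, fun t => (Filter.tendsto_atTop.1 hc_top t).exists⟩

section MittagLeffler

variable {T : Type u} [PartialOrder T] [IsDirected T (· ≤ ·)] {F : Tᵒᵖ ⥤ Pointed.{w}}

lemma MittagLeffler.isMittagLeffler (hML : MittagLeffler F) :
    (F ⋙ forget Pointed).IsMittagLeffler := by
  rw [Functor.isMittagLeffler_iff_subset_range_comp]
  intro j
  obtain ⟨s, hts, hs⟩ := hML j.unop
  exact ⟨op s, (homOfLE hts).op, fun k g => (hs k.unop (leOfHom g.unop)).le⟩

lemma exists_plim_eval_eq [Nonempty T] [Countable T] (hML : MittagLeffler F) {t : T}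
    {y : (F.obj (op t)).X} (hy : y ∈ (F ⋙ forget Pointed).eventualRange (op t)) :
    ∃ x : plim F, x.1 (op t) = y := by
  obtain ⟨c, hc, hcof⟩ := exists_monotone_cofinal T
  obtain ⟨n, hn⟩ := hcof t
  have hlift : ∀ m, ∀ z ∈ (F ⋙ forget Pointed).eventualRange (op (c (n + m))),
      ∃ z' ∈ (F ⋙ forget Pointed).eventualRange (op (c (n + m + 1))),
        res F (hc (n + m).le_succ) z' = z := fun m z hz =>
    hML.isMittagLeffler.subset_image_eventualRange _ (homOfLE (hc (n + m).le_succ)).op hz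
  obtain ⟨y', hy', rfl⟩ := hML.isMittagLeffler.subset_image_eventualRange _ (homOfLE hn).op hy
  choose next hnext_mem hnext using hlift
  let Z : ∀ m, {z // z ∈ (F ⋙ forget Pointed).eventualRange (op (c (n + m)))} := fun m =>
    Nat.rec ⟨y', hy'⟩ (fun m zm => ⟨next m zm.1 zm.2, hnext_mem m zm.1 zm.2⟩) m
  obtain ⟨x, hx⟩ := exists_plim_of_chain F (c := fun m => c (n + m)) (fun a b h => hc (by omega))
    (fun t => (hcof t).imp fun m h => h.trans (hc (by omega))) (fun m => (Z m).1)
    (fun m => hnext m _ (Z m).2)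
  exact ⟨x, by rw [← plim_res F x hn]; exact congrArg (res F hn) (hx 0)⟩

end MittagLeffler

section Smash

variable {A : Type*} [AddCommGroup A]

lemma Finsupp.mapDomain_apply_mem {Y Z : Type*} {g : Y → Z} {v : Y →₀ A} {Q : AddSubgroup A}
    (hv : ∀ y, v y ∈ Q) (z : Z) : Finsupp.mapDomain g v z ∈ Q := by
  classical
  rw [Finsupp.mapDomain, Finsupp.sum_apply]
  exact sum_mem fun y _ => by
    dsimp only
    rw [Finsupp.single_apply]
    split_ifs
    exacts [hv y, Q.zero_mem]

variable {Y Z : Type*} (y0 : Y)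

def smashIn (Q : AddSubgroup A) : AddSubgroup (Smash Y y0 A) where
  carrier := {f | ∀ y, f.1 y ∈ Q}
  add_mem' ha hb y := Q.add_mem (ha y) (hb y)
  zero_mem' _ := Q.zero_mem
  neg_mem' ha y := Q.neg_mem (ha y)

variable {y0}

lemma smashIn_mono {Q Q' : AddSubgroup A} (h : Q ≤ Q') : smashIn y0 Q ≤ smashIn y0 Q' :=
  fun _ hf y => h (hf y)

lemma nsmul_eq_zero_iff_mem_smashIn {n : ℕ} {f : Smash Y y0 A} :
    n • f = 0 ↔ f ∈ smashIn y0 (nsmulAddMonoidHom n).ker := by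
  simp [smashIn, Subtype.ext_iff, Finsupp.ext_iff]

lemma exists_nsmul_eq_of_mem_smashIn {n : ℕ} {f : Smash Y y0 A}
    (hf : f ∈ smashIn y0 (nsmulAddMonoidHom n).range) : ∃ f', n • f' = f := by
  classical
  let σ : A → A := fun a => if h : a ≠ 0 ∧ ∃ b, n • b = a then h.2.choose else 0
  have hσ : ∀ y, n • σ (f.1 y) = f.1 y := fun y => by
    by_cases h0 : f.1 y = 0
    · simp [σ, h0]
    · simp only [σ, dif_pos (⟨h0, hf y⟩ : f.1 y ≠ 0 ∧ ∃ b, n • b = f.1 y)]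
      exact (hf y).choose_spec
  refine ⟨⟨Finsupp.mapRange σ (by simp [σ]) f.1, by
    rw [mem_smash, Finsupp.mapRange_apply, mem_smash.1 f.2]
    simp [σ]⟩, ?_⟩
  ext y
  simp [hσ]

lemma smashMap_mem_smashIn (z0 : Z) (g : Y → Z) {f : Smash Y y0 A} {Q : AddSubgroup A}
    (hf : f ∈ smashIn y0 Q) : smashMap y0 z0 g A f ∈ smashIn z0 Q := fun z => by
  by_cases hz : z = z0
  · simp [smashMap, hz, Q.zero_mem]
  · simpa [smashMap, Finsupp.erase_ne hz] using Finsupp.mapDomain_apply_mem hf z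

lemma support_smashMap_subset (z0 : Z) (g : Y → Z) (f : Smash Y y0 A) :
    ((smashMap y0 z0 g A f).1.support : Set Z) ⊆ g '' f.1.support := by
  classical
  intro z hz
  have hz' : z ∈ (Finsupp.mapDomain g f.1).support := by
    simp only [smashMap, AddMonoidHom.coe_mk, ZeroHom.coe_mk, Finset.mem_coe,
      Finsupp.support_erase, Finset.mem_erase] at hz
    exact hz.2
  simpa using Finsupp.mapDomain_support hz'

lemma range_nsmulAddMonoidHom_le_of_dvd {n m : ℕ} (h : n ∣ m) :
    (nsmulAddMonoidHom (α := A) m).range ≤ (nsmulAddMonoidHom n).range := by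
  obtain ⟨k, rfl⟩ := h
  rintro _ ⟨a, rfl⟩
  exact ⟨k • a, by simp [mul_smul]⟩

end Smash

section Glim

variable {T : Type u} [PartialOrder T] (F : Tᵒᵖ ⥤ Pointed.{w}) (A : Type*) [AddCommGroup A]

noncomputable def glimEval (d : Tᵒᵖ) : glim F A →+ Smash (F.obj d).X (F.obj d).point A :=
  (Pi.evalAddMonoidHom _ d).comp (glim F A).subtype

@[simp]
lemma glimEval_apply (d : Tᵒᵖ) (g : glim F A) : glimEval F A d g = g.1 d := rfl

noncomputable def glimIn (Q : AddSubgroup A) : AddSubgroup (glim F A) :=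
  ⨅ d, (smashIn (F.obj d).point Q).comap (glimEval F A d)

variable {F A}

lemma mem_glimIn {Q : AddSubgroup A} {g : glim F A} :
    g ∈ glimIn F A Q ↔ ∀ d, g.1 d ∈ smashIn (F.obj d).point Q := by
  simp [glimIn, AddSubgroup.mem_iInf]

lemma glimIn_mono {Q Q' : AddSubgroup A} (h : Q ≤ Q') : glimIn F A Q ≤ glimIn F A Q' :=
  fun _ hg => mem_glimIn.2 fun d => smashIn_mono h (mem_glimIn.1 hg d)

lemma nsmul_mem_glimIn (n : ℕ) (g : glim F A) :
    n • g ∈ glimIn F A (nsmulAddMonoidHom n).range :=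
  mem_glimIn.2 fun d y => ⟨(g.1 d).1 y, by simp⟩

lemma rho_mem_glimIn {Q : AddSubgroup A} {f : Smash (plim F) (plimPt F) A}
    (hf : f ∈ smashIn (plimPt F) Q) : rho F A f ∈ glimIn F A Q :=
  mem_glimIn.2 fun _ => smashMap_mem_smashIn _ _ hf

lemma glim_res (g : glim F A) {a b : T} (h : a ≤ b) :
    smashMap _ _ (res F h) A (g.1 (op b)) = g.1 (op a) :=
  g.2 _

lemma eval_eq_zero_of_le (g : glim F A) {a b : T} (h : a ≤ b) (hg : g.1 (op b) = 0) :
    g.1 (op a) = 0 := by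
  rw [← glim_res g h, hg, map_zero]

lemma support_subset_eventualRange (g : glim F A) (d : Tᵒᵖ) :
    ((g.1 d).1.support : Set (F.obj d).X) ⊆ (F ⋙ forget Pointed).eventualRange d :=
  fun y hy => (Functor.mem_eventualRange_iff _).2 fun _ u => by
    rw [← g.2 u] at hy
    obtain ⟨x, -, rfl⟩ := support_smashMap_subset _ _ _ hy
    exact ⟨x, rfl⟩

lemma exists_injOn_eval [IsDirected T (· ≤ ·)] [Nonempty T] (s : Finset (plim F)) :
    ∃ t : T, Set.InjOn (fun x : plim F => x.1 (op t)) s := by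
  classical
  have hsep : ∀ x y : plim F, ∃ t : T, x.1 (op t) = y.1 (op t) → x = y := by
    intro x y
    by_cases hxy : x = y
    · exact ⟨Classical.arbitrary T, fun _ => hxy⟩
    · obtain ⟨d, hd⟩ := Function.ne_iff.1 (Subtype.coe_ne_coe.2 hxy)
      exact ⟨d.unop, fun h => absurd h hd⟩
  choose t ht using hsep
  obtain ⟨M, hM⟩ := Finset.exists_le ((s ×ˢ s).image fun p => t p.1 p.2)
  refine ⟨M, fun x hx y hy hxy => ?_⟩
  have hle := hM _ (mem_image_of_mem (fun p => t p.1 p.2) (mk_mem_product hx hy))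
  exact ht x y (by rw [← plim_res F x hle, ← plim_res F y hle]; exact congrArg _ hxy)

lemma mem_smashIn_of_rho_mem [IsDirected T (· ≤ ·)] [Nonempty T] {Q : AddSubgroup A}
    {f : Smash (plim F) (plimPt F) A} (h : rho F A f ∈ glimIn F A Q) :
    f ∈ smashIn (plimPt F) Q := by
  classical
  obtain ⟨t, ht⟩ := exists_injOn_eval (insert (plimPt F) f.1.support)
  intro x
  by_cases hx : x ∈ f.1.support
  · have hxpt : x ≠ plimPt F := by
      rintro rfl
      exact Finsupp.mem_support_iff.1 hx (mem_smash.1 f.2)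
    have hxt : x.1 (op t) ≠ (F.obj (op t)).point :=
      ht.ne (by simp [hx]) (by simp) hxpt
    have hval : ((rho F A f).1 (op t)).1 (x.1 (op t)) = f.1 x := by
      show (Finsupp.mapDomain _ f.1).erase _ _ = _
      rw [Finsupp.erase_ne hxt]
      exact Finsupp.mapDomain_apply' _ _ (by simp) ht (by simp [hx])
    exact hval ▸ mem_glimIn.1 h _ _
  · rw [Finsupp.notMem_support_iff.1 hx]
    exact Q.zero_mem

end Glim

section Filtration

variable {T : Type u} [PartialOrder T] (F : Tᵒᵖ ⥤ Pointed.{w}) (A : Type*) [AddCommGroup A]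

noncomputable def evalFiltration (c : ℕ → T) (n : ℕ) : AddSubgroup (glim F A) :=
  (glimEval F A (op (c n))).ker

variable {F A}

lemma exists_isFilteredSum_evalFiltration {c : ℕ → T} (hc : Monotone c)
    (hcof : ∀ t, ∃ n, t ≤ c n) (e : ℕ → glim F A) (he : ∀ k, e k ∈ evalFiltration F A c k) :
    ∃ s, IsFilteredSum (evalFiltration F A c) e s := by
  have hstab : ∀ (t : T) N N', t ≤ c N → N ≤ N' →
      ∑ k ∈ range N', (e k).1 (op t) = ∑ k ∈ range N, (e k).1 (op t) := by
    intro t N N' ht hN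
    induction N', hN using Nat.le_induction with
    | base => rfl
    | succ N' hN ih =>
      rw [sum_range_succ, ih, eval_eq_zero_of_le _ (ht.trans (hc hN)) (he N'), add_zero]
  choose N hN using hcof
  have hsum : ∀ t M, t ≤ c M →
      ∑ k ∈ range M, (e k).1 (op t) = ∑ k ∈ range (N t), (e k).1 (op t) := fun t M h =>
    (hstab t M _ h (le_max_left _ _)).symm.trans (hstab t (N t) _ (hN t) (le_max_right _ _))
  let s : glim F A := ⟨fun d => ∑ k ∈ range (N d.unop), (e k).1 d, fun d d' u => by
    rw [map_sum, sum_congr rfl fun k _ => (e k).2 u]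
    exact hsum _ _ ((leOfHom u.unop).trans (hN _))⟩
  refine ⟨s, fun M => ?_⟩
  show glimEval F A _ (s - ∑ k ∈ range M, e k) = 0
  rw [map_sub, map_sum, sub_eq_zero]
  exact (hsum _ _ le_rfl).symm

lemma isCompleteFiltration_evalFiltration {c : ℕ → T} (hc : Monotone c)
    (hcof : ∀ t, ∃ n, t ≤ c n) : IsCompleteFiltration (evalFiltration F A c) where
  antitone _ _ hmn g hg := eval_eq_zero_of_le g (hc hmn) hg
  eq_zero_of_forall_mem g hg := Subtype.ext <| funext fun d => by
    obtain ⟨n, hn⟩ := hcof d.unop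
    exact eval_eq_zero_of_le g hn (hg n)
  exists_isFilteredSum := exists_isFilteredSum_evalFiltration hc hcof

end Filtration

section Cokernel

variable {T : Type u} [PartialOrder T] [IsDirected T (· ≤ ·)] [Nonempty T] [Countable T]
  {F : Tᵒᵖ ⥤ Pointed.{w}} {A : Type*} [AddCommGroup A] (hML : MittagLeffler F)
include hML

lemma exists_rho_eval_eq (g : glim F A) (t : T) {Q : AddSubgroup A}
    (hg : g.1 (op t) ∈ smashIn _ Q) :
    ∃ f ∈ smashIn (plimPt F) Q, (rho F A f).1 (op t) = g.1 (op t) := by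
  classical
  have : Nonempty (plim F) := ⟨plimPt F⟩
  choose! lift hlift using fun y (hy : y ∈ (g.1 (op t)).1.support) =>
    exists_plim_eval_eq hML (support_subset_eventualRange g _ hy)
  have hpt : plimPt F ∉ (g.1 (op t)).1.support.image lift := by
    simp only [Finset.mem_image, not_exists, not_and]
    intro y hy he
    apply Finsupp.mem_support_iff.1 hy
    rw [← hlift y hy, he]
    exact mem_smash.1 (g.1 (op t)).2
  refine ⟨⟨Finsupp.mapDomain lift (g.1 (op t)).1, Finsupp.notMem_support_iff.1 fun h =>
    hpt (Finsupp.mapDomain_support h)⟩, Finsupp.mapDomain_apply_mem hg, Subtype.ext ?_⟩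
  show (Finsupp.mapDomain _ (Finsupp.mapDomain lift _)).erase _ = _
  rw [← Finsupp.mapDomain_comp,
    Finsupp.mapDomain_congr (f := (fun x : plim F => x.1 (op t)) ∘ lift) (g := id) hlift,
    Finsupp.mapDomain_id, Finsupp.erase_of_notMem_support]
  exact Finsupp.notMem_support_iff.2 (mem_smash.1 (g.1 (op t)).2)

lemma exists_sub_rho_mem_evalFiltration (g : glim F A) (c : ℕ → T) (n : ℕ) :
    ∃ r ∈ (rho F A).range, g - r ∈ evalFiltration F A c n := by
  obtain ⟨f, -, hf⟩ := exists_rho_eval_eq hML g (c n) (Q := ⊤) fun _ => trivial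
  refine ⟨rho F A f, ⟨f, rfl⟩, ?_⟩
  simp [evalFiltration, hf]

lemma exists_sub_rho_mem_glimIn {n m : ℕ} (hnm : n ∣ m) {w : glim F A}
    (hw : w ∈ glimIn F A (nsmulAddMonoidHom n).range) {h : glim F A}
    (hwh : w - m • h ∈ (rho F A).range) (t : T) :
    ∃ f ∈ smashIn (plimPt F) (nsmulAddMonoidHom n).range,
      w - rho F A f ∈ glimIn F A (nsmulAddMonoidHom m).range ∧ (w - rho F A f).1 (op t) = 0 := by
  obtain ⟨f₁, hf₁⟩ := hwh
  have hmn := range_nsmulAddMonoidHom_le_of_dvd (A := A) hnm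
  have hf₁_mem : f₁ ∈ smashIn (plimPt F) (nsmulAddMonoidHom n).range :=
    mem_smashIn_of_rho_mem (hf₁ ▸ sub_mem hw (glimIn_mono hmn (nsmul_mem_glimIn m h)))
  obtain ⟨f₂, hf₂, hf₂t⟩ :=
    exists_rho_eval_eq hML (m • h) t (mem_glimIn.1 (nsmul_mem_glimIn m h) _)
  have hw' : w - rho F A (f₁ + f₂) = m • h - rho F A f₂ := by
    rw [map_add, hf₁]
    abel
  refine ⟨f₁ + f₂, add_mem hf₁_mem (smashIn_mono hmn hf₂), ?_, ?_⟩ <;> rw [hw']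
  · exact sub_mem (nsmul_mem_glimIn m h) (rho_mem_glimIn hf₂)
  · simp [hf₂t]

lemma exists_nsmul_rho_eq {n : ℕ} {f : Smash (plim F) (plimPt F) A}
    (hf : f ∈ smashIn (plimPt F) (nsmulAddMonoidHom n).range) {t : T}
    (ht : (rho F A f).1 (op t) = 0) :
    ∃ f', n • rho F A f' = rho F A f ∧ (rho F A f').1 (op t) = 0 := by
  obtain ⟨f₁, rfl⟩ := exists_nsmul_eq_of_mem_smashIn hf
  have htor : (rho F A f₁).1 (op t) ∈ smashIn _ (nsmulAddMonoidHom n).ker := by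
    rw [← nsmul_eq_zero_iff_mem_smashIn, ← glimEval_apply, ← map_nsmul, ← map_nsmul,
      glimEval_apply, ht]
  obtain ⟨f₂, hf₂, hf₂t⟩ := exists_rho_eval_eq hML _ t htor
  refine ⟨f₁ - f₂, ?_, ?_⟩
  · rw [map_sub, smul_sub, ← map_nsmul (rho F A) n f₂, nsmul_eq_zero_iff_mem_smashIn.2 hf₂,
      map_zero, sub_zero, map_nsmul]
  · simp [hf₂t]

lemma exists_mem_range_rho_sub_pow_nsmul_mem (p k : ℕ) {c : ℕ → T} (hc : Monotone c)
    {w : glim F A}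
    (hw : (w : glim F A ⧸ (rho F A).range) ∈ ⋂ n : ℕ, Set.range fun y => p ^ n • y)
    (hwk : w ∈ glimIn F A (nsmulAddMonoidHom (p ^ k)).range)
    (hwc : w ∈ evalFiltration F A c k) :
    ∃ e, (e ∈ (rho F A).range ∧ e ∈ evalFiltration F A c k) ∧
      (((w - p ^ k • e : glim F A) : glim F A ⧸ (rho F A).range) ∈
          ⋂ n : ℕ, Set.range fun y => p ^ n • y) ∧
        w - p ^ k • e ∈ glimIn F A (nsmulAddMonoidHom (p ^ (k + 1))).range ∧
        w - p ^ k • e ∈ evalFiltration F A c (k + 1) := by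
  obtain ⟨y, hy⟩ := Set.mem_iInter.1 hw (k + 1)
  obtain ⟨h, rfl⟩ := QuotientAddGroup.mk_surjective y
  obtain ⟨f, hf, hf_mem, hft⟩ := exists_sub_rho_mem_glimIn hML (pow_dvd_pow p k.le_succ) hwk
    (QuotientAddGroup.eq_iff_sub_mem.1 hy.symm) (c (k + 1))
  have hfc : (rho F A f).1 (op (c k)) = 0 := by
    have := eval_eq_zero_of_le _ (hc k.le_succ) hft
    simp only [AddSubgroup.coe_sub, Pi.sub_apply] at this
    rwa [show w.1 (op (c k)) = 0 from hwc, zero_sub, neg_eq_zero] at this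
  obtain ⟨f', hf', hf'c⟩ := exists_nsmul_rho_eq hML hf hfc
  refine ⟨rho F A f', ⟨⟨f', rfl⟩, hf'c⟩, ?_⟩
  rw [hf', QuotientAddGroup.mk_sub,
    (QuotientAddGroup.eq_zero_iff _).2 (AddMonoidHom.mem_range.2 ⟨f, rfl⟩), sub_zero]
  exact ⟨hw, hf_mem, hft⟩

theorem image_nsmul_iInter_range_pow_nsmul (p : ℕ) :
    (fun y : glim F A ⧸ (rho F A).range => p • y) ''
        (⋂ n : ℕ, Set.range fun y : glim F A ⧸ (rho F A).range => p ^ n • y)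
      = ⋂ n : ℕ, Set.range fun y : glim F A ⧸ (rho F A).range => p ^ n • y := by
  refine (Set.image_subset_iff.2 fun y hy => Set.mem_iInter.2 fun n => ?_).antisymm fun x hx => ?_
  · obtain ⟨z, rfl⟩ := Set.mem_iInter.1 hy n
    exact ⟨p • z, smul_comm _ _ _⟩
  obtain ⟨c, hc, hcof⟩ := exists_monotone_cofinal T
  obtain ⟨g, rfl⟩ := QuotientAddGroup.mk_surjective x
  obtain ⟨r, hr, hgr⟩ := exists_sub_rho_mem_evalFiltration hML g c 0
  have hmk : ((g - r : glim F A) : glim F A ⧸ (rho F A).range) = g := by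
    rw [QuotientAddGroup.mk_sub, (QuotientAddGroup.eq_zero_iff r).2 hr, sub_zero]
  obtain ⟨e, he, hsum⟩ := exists_isFilteredSum_of_step (V := evalFiltration F A c)
    (fun k w => (w : glim F A ⧸ (rho F A).range) ∈ ⋂ n : ℕ, Set.range (fun y => p ^ n • y) ∧
      w ∈ glimIn F A (nsmulAddMonoidHom (p ^ k)).range ∧ w ∈ evalFiltration F A c k)
    (fun k e => e ∈ (rho F A).range ∧ e ∈ evalFiltration F A c k) (fun k => p ^ k)
    (fun _ _ hw => hw.2.2)
    (fun k _ hw => exists_mem_range_rho_sub_pow_nsmul_mem hML p k hc hw.1 hw.2.1 hw.2.2)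
    ⟨hmk ▸ hx, by simpa using nsmul_mem_glimIn 1 (g - r), hgr⟩
  rw [← hmk]
  exact (isCompleteFiltration_evalFiltration hc hcof).mk_mem_image_nsmul_iInter p
    (fun k => (he k).1) (fun k => (he k).2) hsum

end Cokernel

/-- Let `A` be an abelian group, `T` a *countable* directed poset and
`F : Tᵒᵖ ⥤ Set_*` a diagram of pointed sets satisfying the Mittag-Leffler condition.
Then the cokernel `H(X,A)` of the natural map `ρ` is algebraically compact;
explicitly, `H(X,A)` is cotorsion and, for every prime `p`, the subgroup
`⋂_{n} pⁿ·H(X,A)` is `p`-divisible, i.e. `p · (⋂_n pⁿ·H(X,A)) = ⋂_n pⁿ·H(X,A)`. -/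
theorem stmt16 {T : Type u} [PartialOrder T] [IsDirected T (· ≤ ·)] [Nonempty T]
    [Countable T] (F : Tᵒᵖ ⥤ Pointed.{w}) {A : Type*} [AddCommGroup A]
    (hML : MittagLeffler F) :
    Cotorsion (↥(glim F A) ⧸ (rho F A).range) ∧
      ∀ p : ℕ, p.Prime →
        (fun y : ↥(glim F A) ⧸ (rho F A).range => p • y) ''
            (⋂ n : ℕ, Set.range fun y : ↥(glim F A) ⧸ (rho F A).range => p ^ n • y)
          = ⋂ n : ℕ, Set.range fun y : ↥(glim F A) ⧸ (rho F A).range => p ^ n • y := by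
  obtain ⟨c, hc, hcof⟩ := exists_monotone_cofinal T
  exact ⟨(isCompleteFiltration_evalFiltration hc hcof).cotorsion_quotient _
      fun g n => exists_sub_rho_mem_evalFiltration hML g c n,
    fun p _ => image_nsmul_iInter_range_pow_nsmul hML p⟩
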